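/- In the category of chain complexes of ℤ_(p)-modules (or of (E(1)_*, E(1)_*E(1))-comodules), with the monomorphisms as cofibrations, the pushout-product axiom fails: take f to be the inclusion of PI into P(I ⊗ ℚ) and g the map 0 → P(I ⊗ ℤ/p); then the pushout product f □ g is the map P(I ⊗ ℤ/p) → 0, which is not a monomorphism. -/

import Mathlib

/-!
Since `W = 0`, the two corners `U ⊗ 0` and `V ⊗ 0` of the pushout vanish, so the pushout is
`ℤ_(p) ⊗ ℤ/p ≅ ℤ/p`. The target `ℚ ⊗ ℤ/p` is zero because `p` acts invertibly on `ℚ` and by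
zero on `ℤ/p`. A monomorphism into a zero object has zero source, but `ℤ/p ≠ 0` because `p`
is not a unit of `ℤ_(p)`.
-/

open CategoryTheory CategoryTheory.Limits CategoryTheory.MonoidalCategory

instance span_p_isPrime (p : ℕ) [hp : Fact p.Prime] : (Ideal.span {(p : ℤ)}).IsPrime := by
  rw [Ideal.span_singleton_prime (by exact_mod_cast hp.out.ne_zero)]
  exact_mod_cast Int.prime_iff_natAbs_prime.mpr (by simpa using hp.out)

/-- The `p`-local integers `ℤ_(p)`. -/
abbrev Zp (p : ℕ) [Fact p.Prime] := Localization.AtPrime (Ideal.span {(p : ℤ)})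

/-- The pushout product `f □ g` of two morphisms in a monoidal category:
the induced map `(V ⊗ W) ⊔_{U ⊗ W} (U ⊗ X) ⟶ V ⊗ X`. -/
noncomputable def pushoutProd {C : Type*} [Category C] [MonoidalCategory C] {U V W X : C}
    (f : U ⟶ V) (g : W ⟶ X) [HasPushout (U ◁ g) (f ▷ W)] :
    pushout (U ◁ g) (f ▷ W) ⟶ V ⊗ X :=
  pushout.desc (f ▷ X) (V ◁ g) (by rw [whisker_exchange])

theorem TensorProduct.subsingleton_of_surjective_smul_of_smul_eq_zero {R M N : Type*}
    [CommSemiring R] [AddCommMonoid M] [Module R M] [AddCommMonoid N] [Module R N] {r : R}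
    (hM : Function.Surjective (r • · : M → M)) (hN : ∀ n : N, r • n = 0) :
    Subsingleton (TensorProduct R M N) := by
  refine subsingleton_of_forall_eq 0 fun z => ?_
  induction z using TensorProduct.induction_on with
  | zero => rfl
  | tmul m n =>
    obtain ⟨m, rfl⟩ := hM m
    rw [smul_tmul, hN, tmul_zero]
  | add x y hx hy => rw [hx, hy, add_zero]

theorem Algebra.surjective_smul_of_isUnit {R A : Type*} [CommSemiring R] [Semiring A]
    [Algebra R A] {r : R} (hr : IsUnit (algebraMap R A r)) :
    Function.Surjective (r • · : A → A) := fun a =>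
  ⟨hr.unit⁻¹ * a, by simp [Algebra.smul_def, ← mul_assoc]⟩

theorem Ideal.Quotient.smul_span_singleton_eq_zero {R : Type*} [CommRing R] (r : R)
    (x : R ⧸ Ideal.span {r}) : r • x = 0 :=
  Module.mem_annihilator.mp (by rw [Ideal.annihilator_quotient]; exact mem_span_singleton_self r) x

theorem CategoryTheory.Limits.IsZero.tensor_left {C : Type*} [Category C] [Preadditive C]
    [MonoidalCategory C] [MonoidalPreadditive C] (X : C) {Y : C} (hY : IsZero Y) :
    IsZero (X ⊗ Y) := by
  rw [IsZero.iff_id_eq_zero, ← whiskerLeft_id, hY.eq_of_src (𝟙 Y) 0,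
    MonoidalPreadditive.whiskerLeft_zero]

theorem CategoryTheory.Limits.isIso_pushout_inl_of_isZero {C : Type*} [Category C] {A B D : C}
    (f : A ⟶ B) (g : A ⟶ D) [HasPushout f g] (hA : IsZero A) (hD : IsZero D) :
    IsIso (pushout.inl f g) :=
  have := hA.isIso hD g
  inferInstance

namespace Zp

variable (p : ℕ) [Fact p.Prime]

instance : CharZero (Zp p) :=
  charZero_of_injective_algebraMap
    (IsLocalization.injective _ (Ideal.span {(p : ℤ)}).primeCompl_le_nonZeroDivisors)

theorem nontrivial_quotient_span_p : Nontrivial (Zp p ⧸ Ideal.span {(p : Zp p)}) := by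
  rw [Ideal.Quotient.nontrivial_iff, Ne, Ideal.span_singleton_eq_top]
  simpa [Ideal.mem_span_singleton_self] using
    IsLocalization.AtPrime.isUnit_to_map_iff (Zp p) (Ideal.span {(p : ℤ)}) p

end Zp

theorem pushout_product_axiom_fails_general (p : ℕ) [Fact p.Prime] :
    let R := Zp p
    let f : ModuleCat.of R R ⟶ ModuleCat.of R (FractionRing R) :=
      ModuleCat.ofHom (@Algebra.linearMap R (FractionRing R) _ _ OreLocalization.instAlgebra)
    let g : ModuleCat.of R PUnit ⟶ ModuleCat.of R (R ⧸ Ideal.span {(p : R)}) := 0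
    ¬ Mono (pushoutProd f g) ∧
    IsZero (ModuleCat.of R (FractionRing R) ⊗ ModuleCat.of R (R ⧸ Ideal.span {(p : R)})) ∧
    Nonempty ((pushout (ModuleCat.of R R ◁ g) (f ▷ ModuleCat.of R PUnit)) ≅
      ModuleCat.of R (R ⧸ Ideal.span {(p : R)})) := by
  intro R f g
  -- the module structure of `ModuleCat.of R (FractionRing R)`; instance search would instead find
  -- `instAlgebraAtPrimeFractionRing`, which is not reducibly equal to it
  let _ : Algebra R (FractionRing R) := OreLocalization.instAlgebra
  have hp : IsUnit (algebraMap R (FractionRing R) p) := by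
    rw [map_natCast, isUnit_iff_ne_zero, Nat.cast_ne_zero]
    exact (Fact.out : p.Prime).ne_zero
  have hPUnit : IsZero (ModuleCat.of R PUnit) := ModuleCat.isZero_of_subsingleton _
  have hKM :
      IsZero (ModuleCat.of R (FractionRing R) ⊗ ModuleCat.of R (R ⧸ Ideal.span {(p : R)})) :=
    ModuleCat.isZero_of_iff_subsingleton.mpr <|
      TensorProduct.subsingleton_of_surjective_smul_of_smul_eq_zero
        (Algebra.surjective_smul_of_isUnit hp)
        (Ideal.Quotient.smul_span_singleton_eq_zero _)
  have := isIso_pushout_inl_of_isZero (ModuleCat.of R R ◁ g) (f ▷ ModuleCat.of R PUnit)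
    (hPUnit.tensor_left _) (hPUnit.tensor_left _)
  let e := (asIso (pushout.inl (ModuleCat.of R R ◁ g) (f ▷ ModuleCat.of R PUnit))).symm ≪≫
    λ_ (ModuleCat.of R (R ⧸ Ideal.span {(p : R)}))
  have := Zp.nontrivial_quotient_span_p p
  refine ⟨fun _ => ?_, hKM, ⟨e⟩⟩
  have hM : IsZero (ModuleCat.of R (R ⧸ Ideal.span {(p : R)})) :=
    (IsZero.of_mono (pushoutProd f g) hKM).of_iso e.symm
  exact not_subsingleton _ (ModuleCat.isZero_of_iff_subsingleton.mp hM)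

/-- The pushout product of `ℤ_(p) → ℚ` and `0 → ℤ/p` is (isomorphic to) the map
`ℤ/p → 0`; in particular it is not a monomorphism, so the pushout-product axiom fails for
the monomorphism cofibrations. -/
theorem pushout_product_axiom_fails (p : ℕ) [Fact p.Prime] (hodd : p ≠ 2) :
    let R := Zp p
    let f : ModuleCat.of R R ⟶ ModuleCat.of R (FractionRing R) :=
      ModuleCat.ofHom (@Algebra.linearMap R (FractionRing R) _ _ OreLocalization.instAlgebra)
    let g : ModuleCat.of R PUnit ⟶ ModuleCat.of R (R ⧸ Ideal.span {(p : R)}) := 0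
    ¬ Mono (pushoutProd f g) ∧
    IsZero (ModuleCat.of R (FractionRing R) ⊗ ModuleCat.of R (R ⧸ Ideal.span {(p : R)})) ∧
    Nonempty ((pushout (ModuleCat.of R R ◁ g) (f ▷ ModuleCat.of R PUnit)) ≅
      ModuleCat.of R (R ⧸ Ideal.span {(p : R)})) :=
  pushout_product_axiom_fails_general p
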